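/- arXiv:0905.3779 — 4 statements merged into one kernel-verified Lean document; each statement's English description precedes it below -/
import Mathlib

section
/- Let q be an odd prime power with q > 5, and let F, G ∈ 𝔽_q[X] be polynomials of degree 2 such that for every x ∈ 𝔽_q, F(x) ≡ G(x) modulo the group of nonzero squares, with the convention that 0 ≡ 0 (i.e., F(x) and G(x) differ by a nonzero square factor, or are both zero). Then F = u² G for some u ∈ 𝔽_q^×. -/
open Polynomial Finset

section aux

variable {F : Type} [Field F] [Fintype F] [DecidableEq F]

omit [DecidableEq F] in
lemma aux_two_ne_zero (hodd : Odd (Fintype.card F)) : (2 : F) ≠ 0 := by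
  apply Ring.two_ne_zero
  intro h
  have h2 := FiniteField.even_card_of_char_two h
  rw [Nat.odd_iff] at hodd
  omega

/-- The set of nonzero squares has cardinality at most `(q-1)/2`. -/
lemma aux_sq_card (hodd : Odd (Fintype.card F)) :
    2 * ((Finset.univ : Finset Fˣ).image (fun u : Fˣ => (u : F) ^ 2)).card
      ≤ Fintype.card F - 1 := by
  have h2 : (2 : F) ≠ 0 := aux_two_ne_zero hodd
  have := Finset.mul_card_image_le_card (f := fun u : Fˣ => (u : F) ^ 2)
    (Finset.univ : Finset Fˣ) 2 ?_
  · simpa [Fintype.card_units] using this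
  · intro b hb
    obtain ⟨u, -, rfl⟩ := Finset.mem_image.mp hb
    have hne : u ≠ -u := by
      intro h
      apply h2
      have : (u : F) = -(u : F) := by exact_mod_cast congrArg (Units.val) h
      have h0 : (2 : F) * (u : F) = 0 := by linear_combination this
      rcases mul_eq_zero.mp h0 with h' | h'
      · exact h'
      · exact absurd h' u.ne_zero
    have hsub : ({u, -u} : Finset Fˣ) ⊆ {a ∈ (Finset.univ : Finset Fˣ) | (a : F) ^ 2 = (u : F) ^ 2} := by
      intro v hv
      simp only [Finset.mem_insert, Finset.mem_singleton] at hv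
      rcases hv with rfl | rfl <;> simp [Finset.mem_filter]
    calc 2 = ({u, -u} : Finset Fˣ).card := by
            rw [Finset.card_insert_of_notMem (by simpa using hne), Finset.card_singleton]
      _ ≤ _ := Finset.card_le_card hsub

/-- Counting lemma: if `P ≠ u²·G` for all units `u`, then the set of points where the
values agree up to a nonzero square is small. -/
lemma aux_count (P G : Polynomial F) (d : ℕ) (hd : P.degree ≤ d) (hg : G.degree ≤ d)
    (hne : ∀ u : Fˣ, P ≠ Polynomial.C ((u : F) ^ 2) * G)
    (A : Finset F)
    (hA : ∀ x ∈ A, G.eval x ≠ 0 ∧ ∃ c : Fˣ, P.eval x = (c : F) ^ 2 * G.eval x) :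
    A.card ≤ d * ((Finset.univ : Finset Fˣ).image (fun u : Fˣ => (u : F) ^ 2)).card := by
  set f : F → F := fun x => P.eval x * (G.eval x)⁻¹ with hf
  have key : ∀ x ∈ A, f x ∈ (Finset.univ : Finset Fˣ).image (fun u : Fˣ => (u : F) ^ 2) := by
    intro x hx
    obtain ⟨hgx, c, hc⟩ := hA x hx
    exact Finset.mem_image.mpr ⟨c, Finset.mem_univ _, by simp [hf, hc, hgx]⟩
  apply Finset.card_le_mul_card_image_of_maps_to key
  intro b hb
  obtain ⟨u, -, rfl⟩ := Finset.mem_image.mp hb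
  set Q := P - Polynomial.C ((u : F) ^ 2) * G with hQ
  have hQ0 : Q ≠ 0 := sub_ne_zero.mpr (hne u)
  have hQd : Q.natDegree ≤ d := by
    apply Polynomial.natDegree_le_iff_degree_le.mpr
    apply le_trans (Polynomial.degree_sub_le _ _)
    refine max_le hd (le_trans (Polynomial.degree_mul_le _ _) ?_)
    calc Polynomial.degree (Polynomial.C ((u:F)^2)) + G.degree ≤ 0 + (d : WithBot ℕ) :=
          add_le_add Polynomial.degree_C_le hg
      _ = d := zero_add _
  have hsub : {x ∈ A | f x = (u : F) ^ 2} ⊆ Q.roots.toFinset := by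
    intro x hx
    obtain ⟨hxA, hfx⟩ := Finset.mem_filter.mp hx
    obtain ⟨hgx, -⟩ := hA x hxA
    rw [Multiset.mem_toFinset, Polynomial.mem_roots hQ0]
    have hval : P.eval x = (u : F) ^ 2 * G.eval x := by
      simp only [hf] at hfx; field_simp at hfx
      linear_combination hfx
    simp [Q, Polynomial.IsRoot, hval]
  calc {x ∈ A | f x = (u : F) ^ 2}.card ≤ Q.roots.toFinset.card := Finset.card_le_card hsub
    _ ≤ Multiset.card Q.roots := Multiset.toFinset_card_le _
    _ ≤ Q.natDegree := Polynomial.card_roots' Q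
    _ ≤ d := hQd

end aux

/-- If `q > 5` is odd and `F, G ∈ 𝔽_q[X]` are quadratic polynomials whose values at every
point of `𝔽_q` agree up to a nonzero square (with the convention `0 ≡ 0`), then
`F = u² G` for some `u ∈ 𝔽_q^×`. -/
theorem stmt_0 (F : Type) [Field F] [Fintype F]
    (hodd : Odd (Fintype.card F)) (h5 : 5 < Fintype.card F)
    (P G : Polynomial F) (hP : P.degree = 2) (hG : G.degree = 2)
    (h : ∀ x : F, ∃ c : Fˣ, P.eval x = (c : F) ^ 2 * G.eval x) :
    ∃ u : Fˣ, P = Polynomial.C ((u : F) ^ 2) * G := by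
  classical
  by_contra hne
  push_neg at hne
  have hsq := aux_sq_card (F := F) hodd
  by_cases hroot : ∃ r : F, G.eval r = 0
  · -- G has a root r; divide it out of both P and G.
    obtain ⟨r, hr⟩ := hroot
    have hPr : P.eval r = 0 := by
      obtain ⟨c, hc⟩ := h r
      rw [hc, hr, mul_zero]
    obtain ⟨G₁, hG₁⟩ := (Polynomial.dvd_iff_isRoot.mpr hr : (X - Polynomial.C r) ∣ G)
    obtain ⟨P₁, hP₁⟩ := (Polynomial.dvd_iff_isRoot.mpr hPr : (X - Polynomial.C r) ∣ P)
    have hdG₁ : G₁.degree = 1 := by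
      rw [hG₁, Polynomial.degree_mul, Polynomial.degree_X_sub_C] at hG
      apply WithBot.add_left_cancel (by simp : (1 : WithBot ℕ) ≠ ⊥)
      rw [hG]; rfl
    have hdP₁ : P₁.degree = 1 := by
      rw [hP₁, Polynomial.degree_mul, Polynomial.degree_X_sub_C] at hP
      apply WithBot.add_left_cancel (by simp : (1 : WithBot ℕ) ≠ ⊥)
      rw [hP]; rfl
    have hG₁0 : G₁ ≠ 0 := fun h0 => by simp [h0] at hdG₁
    have hne₁ : ∀ u : Fˣ, P₁ ≠ Polynomial.C ((u : F) ^ 2) * G₁ := by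
      intro u hu
      exact hne u (by rw [hP₁, hu, hG₁]; ring)
    set A : Finset F := Finset.univ \ insert r G₁.roots.toFinset with hA
    have hAcard : Fintype.card F - 2 ≤ A.card := by
      rw [hA, Finset.card_sdiff_of_subset (Finset.subset_univ _), Finset.card_univ]
      have h1 : (insert r G₁.roots.toFinset).card ≤ 2 := by
        calc (insert r G₁.roots.toFinset).card ≤ G₁.roots.toFinset.card + 1 :=
              Finset.card_insert_le _ _
          _ ≤ Multiset.card G₁.roots + 1 := by
              exact Nat.add_le_add_right (Multiset.toFinset_card_le _) 1
          _ ≤ G₁.natDegree + 1 := Nat.add_le_add_right (Polynomial.card_roots' G₁) 1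
          _ ≤ 2 := by
              have : G₁.natDegree ≤ 1 := Polynomial.natDegree_le_iff_degree_le.mpr (le_of_eq hdG₁)
              omega
      omega
    have hcount := aux_count P₁ G₁ 1 (le_of_eq hdP₁) (le_of_eq hdG₁) hne₁ A ?_
    · omega
    · intro x hx
      rw [hA, Finset.mem_sdiff, Finset.mem_insert] at hx
      push_neg at hx
      obtain ⟨-, hxr, hxroots⟩ := hx
      have hgx : G₁.eval x ≠ 0 := by
        intro h0
        exact hxroots (Multiset.mem_toFinset.mpr ((Polynomial.mem_roots hG₁0).mpr h0))
      refine ⟨hgx, ?_⟩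
      obtain ⟨c, hc⟩ := h x
      refine ⟨c, ?_⟩
      rw [hP₁, hG₁] at hc
      simp only [Polynomial.eval_mul, Polynomial.eval_sub, Polynomial.eval_X,
        Polynomial.eval_C] at hc
      have hxr' : x - r ≠ 0 := sub_ne_zero.mpr hxr
      apply mul_left_cancel₀ hxr'
      linear_combination hc
  · -- G has no root: every point is a good point.
    push_neg at hroot
    have hcount := aux_count P G 2 (le_of_eq hP) (le_of_eq hG) hne Finset.univ ?_
    · rw [Finset.card_univ] at hcount
      omega
    · intro x _
      exact ⟨hroot x, h x⟩
end

section
/- Let (W, φ) be a quadratic space over the finite field 𝔽_q (q odd) of dimension n whose radical has codimension r (so the rank of φ is r), and let φ₀ be the restriction of φ to a complement of the radical. Then the Gauss sum Γ(W,φ) = Σ_{w∈W} χ(φ(w)) equals q^{n−r} · ψ(det φ₀) · G^r, where χ(u) = exp(2πi Tr(u)/p), ψ is the quadratic character of 𝔽_q^×, and G = Σ_{x∈𝔽_q} χ(x²). -/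
/-!
Expanding `φ` in the diagonalizing basis turns the Gauss sum into a product of one-variable
sums `∑ₓ χ(dᵢ x²)`. A coordinate with `dᵢ = 0` contributes `q`. For `dᵢ ≠ 0`, counting square
roots gives `∑ₓ χ(x²) = ∑ᵤ (1 + ψ(u)) χ(u) = ∑ᵤ ψ(u) χ(u)`, a classical Gauss sum, and
rescaling by `dᵢ` in that sum multiplies it by `ψ(dᵢ)`.
-/

noncomputable section

/-- The standard additive character `χ(u) = exp(2πi Tr(u)/p)` of a finite field of
characteristic `p`, where `Tr` is the trace to the prime field. -/
def chiF (F : Type) [Field F] [Fintype F] (u : F) : ℂ :=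
  letI : Algebra (ZMod (ringChar F)) F := ZMod.algebra F (ringChar F)
  Complex.exp (2 * Real.pi * Complex.I *
    ((Algebra.trace (ZMod (ringChar F)) F u).val : ℂ) / (ringChar F : ℂ))

/-- The Gauss sum of a quadratic form `φ` on a finite `F`-vector space `W`. -/
def GaussSum (F : Type) [Field F] [Fintype F] (W : Type) [AddCommGroup W] [Module F W]
    [Fintype W] (φ : QuadraticForm F W) : ℂ :=
  ∑ w : W, chiF F (φ w)

/-- The quadratic character of `𝔽_q^×` (extended by `0` at `0`). -/
def psiF (F : Type) [Field F] [Fintype F] (a : F) : ℂ :=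
  letI : Decidable (a = 0) := Classical.propDecidable _
  letI : Decidable (IsSquare a) := Classical.propDecidable _
  if a = 0 then 0 else if IsSquare a then 1 else -1

open Finset

namespace AddChar

lemma map_sum_eq_prod {A M ι : Type*} [AddCommMonoid A] [CommMonoid M] (ψ : AddChar A M)
    (s : Finset ι) (f : ι → A) : ψ (∑ i ∈ s, f i) = ∏ i ∈ s, ψ (f i) := by
  induction s using cons_induction with
  | empty => simp
  | cons a s ha ih => rw [sum_cons, prod_cons, map_add_eq_mul, ih]

end AddChar

section QuadraticSums

variable {F : Type*} [Field F] [Fintype F] [DecidableEq F] {R : Type*} [CommRing R] [IsDomain R]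
  {ψ : AddChar F R}

lemma sum_addChar_sq_eq_gaussSum (hF : ringChar F ≠ 2) (hψ : ψ ≠ 1) :
    ∑ x, ψ (x ^ 2) = gaussSum ((quadraticChar F).ringHomComp (Int.castRingHom R)) ψ := by
  have hfiber (u : F) : ∑ x with x ^ 2 = u, ψ (x ^ 2) = (quadraticChar F u + 1 : ℤ) * ψ u := by
    rw [sum_congr rfl fun x hx => by rw [(mem_filter.mp hx).2], sum_const,
      nsmul_eq_mul, ← quadraticChar_card_sqrts hF u]
    simp
  rw [← sum_fiberwise univ (· ^ 2), sum_congr rfl fun u _ => hfiber u]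
  simp only [Int.cast_add, Int.cast_one, add_mul, one_mul, sum_add_distrib,
    AddChar.sum_eq_zero_of_ne_one hψ, add_zero, gaussSum, MulChar.ringHomComp_apply,
    eq_intCast]

lemma sum_addChar_mul_sq (hF : ringChar F ≠ 2) (hψ : ψ ≠ 1) {a : F} (ha : a ≠ 0) :
    ∑ x, ψ (a * x ^ 2) = quadraticChar F a * ∑ x, ψ (x ^ 2) := by
  set χ := (quadraticChar F).ringHomComp (Int.castRingHom R)
  have hχa : χ a * χ a = 1 := by
    simpa [χ, sq] using congrArg (Int.cast : ℤ → R) (quadraticChar_sq_one ha)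
  have hshift : ψ.mulShift a ≠ 1 := AddChar.IsPrimitive.of_ne_one hψ ha
  have hmulShift := gaussSum_mulShift χ ψ (Units.mk0 a ha)
  rw [Units.val_mk0] at hmulShift
  calc ∑ x, ψ (a * x ^ 2) = ∑ x, ψ.mulShift a (x ^ 2) := rfl
    _ = χ a * gaussSum χ ψ := by
      rw [sum_addChar_sq_eq_gaussSum hF hshift, ← hmulShift, ← mul_assoc, hχa, one_mul]
    _ = quadraticChar F a * ∑ x, ψ (x ^ 2) := by
      rw [sum_addChar_sq_eq_gaussSum hF hψ]; rfl

lemma sum_addChar_diagonal_quadratic {ι : Type*} [Fintype ι] [DecidableEq ι]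
    (hF : ringChar F ≠ 2) (hψ : ψ ≠ 1) (d : ι → F) :
    ∑ c : ι → F, ψ (∑ i, d i * c i ^ 2) =
      (Fintype.card F : R) ^ #{i | d i = 0} * quadraticChar F (∏ i with d i ≠ 0, d i)
        * (∑ x, ψ (x ^ 2)) ^ #{i | d i ≠ 0} := by
  calc ∑ c : ι → F, ψ (∑ i, d i * c i ^ 2) = ∏ i, ∑ x, ψ (d i * x ^ 2) := by
        simp only [AddChar.map_sum_eq_prod, Fintype.prod_sum]
    _ = (∏ i with d i = 0, ∑ x, ψ (d i * x ^ 2)) * ∏ i with d i ≠ 0, ∑ x, ψ (d i * x ^ 2) :=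
        (prod_filter_mul_prod_filter_not _ _ _).symm
    _ = (∏ i with d i = 0, (Fintype.card F : R))
          * ∏ i with d i ≠ 0, (quadraticChar F (d i) * ∑ x, ψ (x ^ 2)) := by
        congr 1 <;> refine prod_congr rfl fun i hi => ?_ <;> rw [mem_filter] at hi
        · simp [hi.2]
        · exact sum_addChar_mul_sq hF hψ hi.2
    _ = _ := by
        rw [prod_mul_distrib, map_prod, Int.cast_prod]
        simp only [prod_const, mul_assoc]

end QuadraticSums

lemma psiF_eq_quadraticChar {F : Type} [Field F] [Fintype F] [DecidableEq F] (a : F) :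
    psiF F a = quadraticChar F a := by
  simp only [psiF, quadraticChar_apply, quadraticCharFun]
  split_ifs <;> simp_all

lemma exists_addChar_ne_one_coe_eq_chiF (F : Type) [Field F] [Fintype F] :
    ∃ ψ : AddChar F ℂ, ψ ≠ 1 ∧ ⇑ψ = chiF F := by
  have : Fact (ringChar F).Prime := ⟨CharP.char_is_prime F _⟩
  let _ : Algebra (ZMod (ringChar F)) F := ZMod.algebra F (ringChar F)
  let Tr := (Algebra.trace (ZMod (ringChar F)) F).toAddMonoidHom
  refine ⟨ZMod.stdAddChar.compAddMonoidHom Tr, fun h => ?_, ?_⟩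
  · obtain ⟨c, hc⟩ := FiniteField.trace_to_zmod_nondegenerate F (one_ne_zero (α := F))
    rw [one_mul] at hc
    refine hc (ZMod.injective_stdAddChar ?_)
    simpa [Tr] using DFunLike.congr_fun h c
  · funext u
    simp only [AddChar.compAddMonoidHom_apply, ZMod.stdAddChar_apply, ZMod.toCircle_apply, chiF]
    rfl

open scoped Classical in
/-- Gauss sum of a quadratic form on a finite-field vector space: if `φ` is diagonalized
by a basis `b` with coefficients `d i` (so the radical is spanned by the `b i` with
`d i = 0` and the rank is `r`), then `Γ(W,φ) = q^{n-r} ψ(det φ₀) G^r`. -/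
theorem stmt_2 (F : Type) [Field F] [Fintype F] (hodd : Odd (Fintype.card F))
    (W : Type) [AddCommGroup W] [Module F W] [Fintype W]
    (n : ℕ) (b : Module.Basis (Fin n) F W)
    (φ : QuadraticForm F W) (d : Fin n → F)
    (hdiag : ∀ v : W, φ v = ∑ i, d i * (b.repr v i) ^ 2)
    (r : ℕ) (hr : r = (Finset.univ.filter fun i => d i ≠ 0).card) :
    GaussSum F W φ =
      (Fintype.card F : ℂ) ^ (n - r)
        * psiF F (∏ i ∈ Finset.univ.filter fun i => d i ≠ 0, d i)
        * (∑ x : F, chiF F (x ^ 2)) ^ r := by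
  have hF : ringChar F ≠ 2 := fun h => by
    have := FiniteField.even_card_of_char_two h
    rw [Nat.odd_iff] at hodd
    omega
  obtain ⟨ψ, hψ, hψχ⟩ := exists_addChar_ne_one_coe_eq_chiF F
  have hzero : #{i | d i = 0} = n - r := by
    have := card_filter_add_card_filter_not (s := univ) (p := fun i : Fin n => d i = 0)
    simp only [card_univ, Fintype.card_fin, ← ne_eq] at this
    omega
  calc GaussSum F W φ = ∑ c : Fin n → F, ψ (∑ i, d i * c i ^ 2) := by
        simp only [GaussSum, hdiag, ← hψχ]
        exact Fintype.sum_equiv b.equivFun.toEquiv _ _ fun _ => rfl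
    _ = _ := by
        rw [sum_addChar_diagonal_quadratic hF hψ d, hzero, ← hr, psiF_eq_quadraticChar, hψχ]

end
end

section
/- Two nondegenerate quadratic forms φ, φ' on a finite-dimensional vector space W over 𝔽_q (q odd) are isometric if and only if their Gauss sums Γ(W,φ) and Γ(W,φ') are equal. -/
noncomputable section

/-!
Diagonalise both forms as `⟨w₁, …, wₙ⟩`. The Gauss sum of a diagonal form factors as
`∏ᵢ ∑ₓ χ(wᵢ x²) = η(∏ᵢ wᵢ) gⁿ`, where `η` is the quadratic character and `g ≠ 0` is the quadratic
Gauss sum, so equal Gauss sums force the discriminants to agree modulo squares. Conversely, over a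
finite field every binary form `⟨a, b⟩` represents `1` and is therefore isometric to `⟨a b, 1⟩`;
hence every diagonal form is isometric to `⟨∏ᵢ wᵢ, 1, …, 1⟩` and is determined up to isometry by
its discriminant modulo squares.
-/

open QuadraticMap

namespace QuadraticMap

section

variable {R M₁ M₂ M₃ N : Type*} [CommSemiring R] [AddCommMonoid M₁] [AddCommMonoid M₂]
  [AddCommMonoid M₃] [AddCommMonoid N] [Module R M₁] [Module R M₂] [Module R M₃] [Module R N]

instance : @Trans (QuadraticMap R M₁ N) (QuadraticMap R M₂ N) (QuadraticMap R M₃ N)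
    Equivalent Equivalent Equivalent :=
  ⟨Equivalent.trans⟩

def IsometryEquiv.prodAssoc (Q₁ : QuadraticMap R M₁ N) (Q₂ : QuadraticMap R M₂ N)
    (Q₃ : QuadraticMap R M₃ N) :
    ((Q₁.prod Q₂).prod Q₃).IsometryEquiv (Q₁.prod (Q₂.prod Q₃)) where
  toLinearEquiv := LinearEquiv.prodAssoc R M₁ M₂ M₃
  map_app' m := by simp [add_assoc]

variable {S : Type*} [Monoid S] [DistribMulAction S R] [SMulCommClass S R R]
  [IsScalarTower S R R]

def isometryEquivProdWeightedSumSquaresCons {n : ℕ} (d : S) (v : Fin n → S) :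
    ((d • (sq : QuadraticMap R R R)).prod (weightedSumSquares R v)).IsometryEquiv
      (weightedSumSquares R (Fin.cons d v : Fin (n + 1) → S)) where
  toLinearEquiv := Fin.consLinearEquiv R fun _ => R
  map_app' m := by simp [weightedSumSquares_apply, Fin.sum_univ_succ]

end

variable {R : Type*} [CommRing R]

-- The columns `(b y, -a x)` and `(x, y)` are orthogonal for `⟨a, b⟩`, with values `a b` and `1`.
def isometryEquivProdSmulSq {a b x y : R} (h : a * x ^ 2 + b * y ^ 2 = 1) :
    (((a * b) • (sq : QuadraticMap R R R)).prod sq).IsometryEquiv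
      ((a • (sq : QuadraticMap R R R)).prod (b • sq)) where
  toFun p := (b * y * p.1 + x * p.2, -(a * x) * p.1 + y * p.2)
  invFun p := (y * p.1 - x * p.2, a * x * p.1 + b * y * p.2)
  map_add' p q := by ext <;> simp <;> ring
  map_smul' c p := by ext <;> simp <;> ring
  left_inv p := by
    ext
    · linear_combination p.1 * h
    · linear_combination p.2 * h
  right_inv p := by
    ext
    · linear_combination p.1 * h
    · linear_combination p.2 * h
  map_app' p := by
    simp only [prod_apply, smul_apply, sq_apply, smul_eq_mul]
    linear_combination (a * b * p.1 ^ 2 + p.2 ^ 2) * h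

theorem separatingLeft_associated {M : Type*} [Invertible (2 : R)] [AddCommGroup M] [Module R M]
    {Q : QuadraticForm R M} (h : Q.polarBilin.Nondegenerate) :
    (associated (R := R) Q).SeparatingLeft := fun x hx =>
  h.1 x fun y => by
    rw [← two_nsmul_associated R, LinearMap.smul_apply, LinearMap.smul_apply, hx y, smul_zero]

end QuadraticMap

theorem AddChar.map_sum_eq_prod_s3 {A M ι : Type*} [AddCommMonoid A] [CommMonoid M]
    (ψ : AddChar A M) (s : Finset ι) (f : ι → A) : ψ (∑ i ∈ s, f i) = ∏ i ∈ s, ψ (f i) := by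
  induction s using Finset.cons_induction with
  | empty => simp
  | cons a s ha ih => rw [Finset.sum_cons, Finset.prod_cons, AddChar.map_add_eq_mul, ih]

namespace FiniteField

instance neZero_ringChar (F : Type*) [Field F] [Finite F] : NeZero (ringChar F) :=
  ⟨(CharP.char_is_prime F (ringChar F)).ne_zero⟩

variable {F : Type*} [Field F] [Fintype F]

theorem exists_mul_sq_add_mul_sq_eq_one (hF : ringChar F ≠ 2) {a b : F} (ha : a ≠ 0)
    (hb : b ≠ 0) : ∃ x y : F, a * x ^ 2 + b * y ^ 2 = 1 := by
  have hf : (Polynomial.C a * Polynomial.X ^ 2).degree = 2 := Polynomial.degree_C_mul_X_pow 2 ha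
  have hg : (Polynomial.C b * Polynomial.X ^ 2 - 1).degree = 2 := by
    rw [Polynomial.degree_sub_eq_left_of_degree_lt] <;>
      simp [Polynomial.degree_C_mul_X_pow 2 hb]
  obtain ⟨x, y, hxy⟩ := exists_root_sum_quadratic hf hg (odd_card_of_char_ne_two hF)
  refine ⟨x, y, ?_⟩
  simp only [Polynomial.eval_sub, Polynomial.eval_mul, Polynomial.eval_pow, Polynomial.eval_C,
    Polynomial.eval_X, Polynomial.eval_one] at hxy
  linear_combination hxy

theorem equivalent_weightedSumSquares_cons_cons (hF : ringChar F ≠ 2) {n : ℕ} (a b : Fˣ)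
    (v : Fin n → Fˣ) :
    (weightedSumSquares F (Fin.cons a (Fin.cons b v) : Fin (n + 2) → Fˣ)).Equivalent
      (weightedSumSquares F (Fin.cons (a * b) (Fin.cons 1 v) : Fin (n + 2) → Fˣ)) := by
  obtain ⟨x, y, h⟩ := exists_mul_sq_add_mul_sq_eq_one hF a.ne_zero b.ne_zero
  let e {m : ℕ} (d : Fˣ) (u : Fin m → Fˣ) := isometryEquivProdWeightedSumSquaresCons (R := F) d u
  let sq : QuadraticForm F F := QuadraticMap.sq
  calc Equivalent (weightedSumSquares F (Fin.cons a (Fin.cons b v) : Fin (n + 2) → Fˣ))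
        ((a • sq).prod ((b • sq).prod (weightedSumSquares F v))) :=
      ⟨(e a _).symm.trans ((QuadraticMap.IsometryEquiv.refl _).prod (e b v).symm)⟩
    Equivalent _ (((a • sq).prod (b • sq)).prod (weightedSumSquares F v)) :=
      ⟨(QuadraticMap.IsometryEquiv.prodAssoc _ _ _).symm⟩
    Equivalent _ ((((a * b) • sq).prod sq).prod (weightedSumSquares F v)) :=
      ⟨(isometryEquivProdSmulSq h).symm.prod (QuadraticMap.IsometryEquiv.refl _)⟩
    Equivalent _ (((a * b) • sq).prod (((1 : Fˣ) • sq).prod (weightedSumSquares F v))) := by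
      rw [one_smul]
      exact ⟨QuadraticMap.IsometryEquiv.prodAssoc _ _ _⟩
    Equivalent _ (weightedSumSquares F (Fin.cons (a * b) (Fin.cons 1 v) : Fin (n + 2) → Fˣ)) :=
      ⟨((QuadraticMap.IsometryEquiv.refl _).prod (e 1 v)).trans (e (a * b) _)⟩

theorem equivalent_weightedSumSquares_cons_prod_one (hF : ringChar F ≠ 2) :
    ∀ {n : ℕ} (w : Fin (n + 1) → Fˣ), (weightedSumSquares F w).Equivalent
      (weightedSumSquares F (Fin.cons (∏ i, w i) 1 : Fin (n + 1) → Fˣ))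
  | 0, w => by
    rw [Fin.prod_univ_one, show (Fin.cons (w 0) 1 : Fin 1 → Fˣ) = w from
      funext fun i => by fin_cases i; rfl]
  | n + 1, w => by
    refine Fin.consCases (fun a v => ?_) w
    let e {m : ℕ} (d : Fˣ) (u : Fin m → Fˣ) := isometryEquivProdWeightedSumSquaresCons (R := F) d u
    let sq : QuadraticForm F F := QuadraticMap.sq
    calc Equivalent (weightedSumSquares F (Fin.cons a v : Fin (n + 2) → Fˣ))
          ((a • sq).prod (weightedSumSquares F v)) := ⟨(e a v).symm⟩
      Equivalent _ ((a • sq).prod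
          (weightedSumSquares F (Fin.cons (∏ i, v i) 1 : Fin (n + 1) → Fˣ))) :=
        (Equivalent.refl _).prod (equivalent_weightedSumSquares_cons_prod_one hF v)
      Equivalent _ (weightedSumSquares F
          (Fin.cons a (Fin.cons (∏ i, v i) 1) : Fin (n + 2) → Fˣ)) := ⟨e _ _⟩
      Equivalent _ (weightedSumSquares F
          (Fin.cons (a * ∏ i, v i) (Fin.cons 1 1) : Fin (n + 2) → Fˣ)) :=
        equivalent_weightedSumSquares_cons_cons hF _ _ _
      Equivalent _ _ := by
        rw [Fin.prod_cons, show (Fin.cons 1 1 : Fin (n + 1) → Fˣ) = 1 from Fin.cons_self_tail 1]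

variable [DecidableEq F]

theorem equivalent_weightedSumSquares_of_quadraticChar_prod_eq (hF : ringChar F ≠ 2) {n : ℕ}
    {w w' : Fin n → Fˣ} (h : quadraticChar F (∏ i, w i : Fˣ) = quadraticChar F (∏ i, w' i : Fˣ)) :
    (weightedSumSquares F w).Equivalent (weightedSumSquares F w') := by
  cases n with
  | zero => rw [Subsingleton.elim w w']
  | succ n =>
    set A := ∏ i, w i
    set A' := ∏ i, w' i
    have hsq : quadraticChar F (A / A' : Fˣ) = 1 := by
      rw [Units.val_div_eq_div_val, div_eq_mul_inv, map_mul, h, ← map_mul,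
        mul_inv_cancel₀ A'.ne_zero, map_one]
    obtain ⟨c, hc⟩ := (quadraticChar_one_iff_isSquare (A / A').ne_zero).mp hsq
    have hc0 : c ≠ 0 := by rintro rfl; simp at hc
    calc Equivalent (weightedSumSquares F w)
          (weightedSumSquares F (Fin.cons A 1 : Fin (n + 1) → Fˣ)) :=
        equivalent_weightedSumSquares_cons_prod_one hF w
      Equivalent _ (weightedSumSquares F (Fin.cons A' 1 : Fin (n + 1) → Fˣ)) := by
        refine ⟨QuadraticForm.isometryEquivWeightedSumSquaresWeightedSumSquares
          (Fin.cons (toUnits (Units.mk0 c hc0)) 1) fun i => ?_⟩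
        refine Fin.cases ?_ (fun i => ?_) i
        · ext
          rw [Units.val_div_eq_div_val, div_eq_iff A'.ne_zero] at hc
          simp [hc]
          ring
        · simp
      Equivalent _ _ := (equivalent_weightedSumSquares_cons_prod_one hF w').symm

theorem sum_sq_eq_sum_quadraticChar_add_one_smul (hF : ringChar F ≠ 2) {M : Type*}
    [AddCommGroup M] (f : F → M) :
    ∑ x, f (x ^ 2) = ∑ u, (quadraticChar F u + 1) • f u := by
  rw [← Finset.sum_fiberwise Finset.univ (fun x => x ^ 2)]
  refine Finset.sum_congr rfl fun u _ => ?_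
  rw [Finset.sum_congr rfl fun x hx => congrArg f (Finset.mem_filter.1 hx).2, Finset.sum_const,
    ← quadraticChar_card_sqrts hF u, natCast_zsmul]
  congr 2
  ext x
  simp

theorem sum_addChar_mul_sq (hF : ringChar F ≠ 2) {R : Type*} [CommRing R] [IsDomain R]
    {ψ : AddChar F R} (hψ : ψ.IsPrimitive) {a : F} (ha : a ≠ 0) :
    ∑ x, ψ (a * x ^ 2) =
      quadraticChar F a * gaussSum ((quadraticChar F).ringHomComp (Int.castRingHom R)) ψ := by
  set χ := (quadraticChar F).ringHomComp (Int.castRingHom R)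
  have hχ : χ a * χ a = 1 := by
    rw [MulChar.ringHomComp_apply, ← map_mul, ← pow_two, quadraticChar_sq_one ha, map_one]
  have hmulShift : ∑ u, ψ (a * u) = 0 := by
    simpa [mul_comm, ha] using AddChar.sum_mulShift a hψ
  have hgaussSum : gaussSum χ (ψ.mulShift a) = χ a * gaussSum χ ψ := by
    rw [← gaussSum_mulShift χ ψ (Units.mk0 a ha), Units.val_mk0, ← mul_assoc, hχ, one_mul]
  rw [sum_sq_eq_sum_quadraticChar_add_one_smul hF fun u => ψ (a * u)]
  simp only [zsmul_eq_mul, Int.cast_add, Int.cast_one, add_mul, Finset.sum_add_distrib, one_mul,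
    hmulShift, add_zero]
  exact hgaussSum

end FiniteField

def chiFChar (F : Type) [Field F] [Fintype F] : AddChar F ℂ :=
  letI : Algebra (ZMod (ringChar F)) F := ZMod.algebra F (ringChar F)
  ZMod.stdAddChar.compAddMonoidHom (Algebra.trace (ZMod (ringChar F)) F).toAddMonoidHom

namespace chiFChar

variable {F : Type} [Field F] [Fintype F]

theorem apply (u : F) : chiFChar F u = chiF F u := by
  simp [chiFChar, chiF, ZMod.stdAddChar_apply, ZMod.toCircle_apply]

theorem isPrimitive : (chiFChar F).IsPrimitive := by
  let _ : Algebra (ZMod (ringChar F)) F := ZMod.algebra F (ringChar F)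
  refine AddChar.IsPrimitive.of_ne_one fun h => ?_
  obtain ⟨b, hb⟩ := FiniteField.trace_to_zmod_nondegenerate F (one_ne_zero (α := F))
  rw [one_mul] at hb
  apply hb
  apply ZMod.injective_stdAddChar
  simpa [chiFChar] using DFunLike.congr_fun h b

end chiFChar

namespace GaussSum

variable {F : Type} [Field F] [Fintype F]

theorem eq_of_equivalent {W W' : Type} [AddCommGroup W] [Module F W] [Fintype W]
    [AddCommGroup W'] [Module F W'] [Fintype W'] {φ : QuadraticForm F W}
    {φ' : QuadraticForm F W'} (h : φ.Equivalent φ') : GaussSum F W φ = GaussSum F W' φ' := by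
  obtain ⟨e⟩ := h
  exact Fintype.sum_equiv e.toLinearEquiv.toEquiv _ _ fun w => by simp

theorem weightedSumSquares_eq [DecidableEq F] (hF : ringChar F ≠ 2) {ι : Type} [Fintype ι]
    [DecidableEq ι] (w : ι → Fˣ) :
    GaussSum F (ι → F) (weightedSumSquares F w) = quadraticChar F (∏ i, w i : Fˣ) *
      gaussSum ((quadraticChar F).ringHomComp (Int.castRingHom ℂ)) (chiFChar F) ^
        Fintype.card ι := by
  simp only [GaussSum, ← chiFChar.apply, weightedSumSquares_apply, AddChar.map_sum_eq_prod_s3]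
  rw [← Fintype.prod_sum fun i (x : F) => chiFChar F (w i • (x * x))]
  simp_rw [Units.smul_def, smul_eq_mul, ← pow_two,
    FiniteField.sum_addChar_mul_sq hF chiFChar.isPrimitive (w _).ne_zero]
  rw [Finset.prod_mul_distrib, Finset.prod_const, Finset.card_univ, Units.coe_prod, map_prod,
    Int.cast_prod]

end GaussSum

/-- Two nondegenerate quadratic forms on a finite-dimensional vector space over a finite
field of odd order are isometric if and only if their Gauss sums are equal. -/
theorem stmt_3 (F : Type) [Field F] [Fintype F] (hodd : Odd (Fintype.card F))
    (W : Type) [AddCommGroup W] [Module F W] [Fintype W]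
    (φ φ' : QuadraticForm F W)
    (hnd : φ.polarBilin.Nondegenerate) (hnd' : φ'.polarBilin.Nondegenerate) :
    QuadraticMap.Equivalent φ φ' ↔ GaussSum F W φ = GaussSum F W φ' := by
  classical
  have hF : ringChar F ≠ 2 := fun h =>
    Nat.not_even_iff_odd.2 hodd (Nat.even_iff.2 (FiniteField.even_card_iff_char_two.1 h))
  have : Invertible (2 : F) := invertibleOfNonzero (Ring.two_ne_zero hF)
  obtain ⟨w, hw⟩ := φ.equivalent_weightedSumSquares_units_of_nondegenerate'
    (separatingLeft_associated hnd)
  obtain ⟨w', hw'⟩ := φ'.equivalent_weightedSumSquares_units_of_nondegenerate'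
    (separatingLeft_associated hnd')
  refine ⟨GaussSum.eq_of_equivalent, fun h => ?_⟩
  rw [GaussSum.eq_of_equivalent hw, GaussSum.eq_of_equivalent hw',
    GaussSum.weightedSumSquares_eq hF, GaussSum.weightedSumSquares_eq hF] at h
  have hg : gaussSum ((quadraticChar F).ringHomComp (Int.castRingHom ℂ)) (chiFChar F) ≠ 0 :=
    gaussSum_ne_zero_of_nontrivial (by exact_mod_cast Fintype.card_ne_zero)
      ((MulChar.ringHomComp_ne_one_iff (Int.castRingHom ℂ).injective_int).2
        (quadraticChar_ne_one hF)) chiFChar.isPrimitive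
  have hdisc := mul_right_cancel₀ (pow_ne_zero _ hg) h
  exact hw.trans ((FiniteField.equivalent_weightedSumSquares_of_quadraticChar_prod_eq hF
    (by exact_mod_cast hdisc)).trans hw'.symm)

end
end

section
/- Let (L,Q) be a definite ternary quadratic lattice over A = 𝔽_q[t] with reduced basis v₁, v₂, v₃, reduced Gram matrix entries mᵢⱼ, and successive minima μ₁ ≤ μ₂ ≤ μ₃ (μᵢ = deg mᵢᵢ). Let M = A v₁ + A v₂. Then for every nonzero w ∈ M, deg B(w, v₃) < deg Q(w), where B is the associated bilinear form. -/
/-!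
Write `Q(w) = a r² + 2 b r s + c s²` with `a = m₁₁`, `b = m₁₂`, `c = m₂₂`, and
`B(w, v₃) = 2 (m₁₃ r + m₂₃ s)`. Since `deg m₁₃ < deg a`, `deg m₂₃ < deg c` and `deg r, deg s ≥ 0`,
every term of `B(w, v₃)` has degree below `max (deg a r², deg c s²)`, so it suffices that
`deg Q(w)` equals this maximum. Reducedness gives `2 deg b < deg a + deg c`, so the cross term is
too small to matter. If `a r²` and `c s²` cancelled at the top, completing the square would show
that `b² - ac` is a square times a principal unit `1 - ε` of `𝔽_q((1/t))`; as `q` is odd such units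
are squares there, so `a X² + 2 b X Y + c Y²` would be isotropic over `𝔽_q((1/t))`, contradicting
definiteness.
-/

open Polynomial FunctionField Matrix

noncomputable section

variable (Fq : Type) [Field Fq] [Fintype Fq] [DecidableEq (RatFunc Fq)]

/-- The canonical ring homomorphism from `Fq(t)` to its completion at infinity. -/
def toInfty : RatFunc Fq →+* RatFunc.CompletionAtInfty Fq :=
  letI := RatFunc.inftyValued Fq
  UniformSpace.Completion.coeRingHom

/-- The quadratic form attached to a Gram matrix. -/
def Qval (M : Matrix (Fin 3) (Fin 3) (RatFunc Fq)) (v : Fin 3 → RatFunc Fq) : RatFunc Fq :=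
  v ⬝ᵥ (M.mulVec v)

/-- A ternary quadratic lattice (Gram matrix over `K = Fq(t)`) is definite if it is
anisotropic over `Fq((1/t))`. -/
def IsDefinite (M : Matrix (Fin 3) (Fin 3) (RatFunc Fq)) : Prop :=
  ∀ w : Fin 3 → RatFunc.CompletionAtInfty Fq, w ⬝ᵥ ((M.map (toInfty Fq)).mulVec w) = 0 → w = 0

/-- Degree of a rational function, with `deg 0 = ⊥`. -/
def degK (x : RatFunc Fq) : WithBot ℤ := if x = 0 then ⊥ else (x.intDegree : WithBot ℤ)

/-- The Gram matrix of a reduced basis. -/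
def IsReducedGram (M : Matrix (Fin 3) (Fin 3) (RatFunc Fq)) : Prop :=
  M.IsSymm ∧ (∀ i j : Fin 3, i ≤ j → degK Fq (M i i) ≤ degK Fq (M j j)) ∧
    ∀ i j : Fin 3, i < j → degK Fq (M i j) < degK Fq (M i i)

/-- The value of the quadratic form at a vector of the lattice `A³`, `A = Fq[t]`. -/
def QA (M : Matrix (Fin 3) (Fin 3) (RatFunc Fq)) (v : Fin 3 → Polynomial Fq) : RatFunc Fq :=
  Qval Fq M (fun i => algebraMap (Polynomial Fq) (RatFunc Fq) (v i))

/-- Two ternary lattices are isospectral if they have the same representation numbers. -/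
def Isospectral (M M' : Matrix (Fin 3) (Fin 3) (RatFunc Fq)) : Prop :=
  ∀ a : RatFunc Fq, Nat.card {v : Fin 3 → Polynomial Fq // QA Fq M v = a}
    = Nat.card {v : Fin 3 → Polynomial Fq // QA Fq M' v = a}

/-- Two ternary lattices are isometric over `A = Fq[t]`. -/
def IsometricA (M M' : Matrix (Fin 3) (Fin 3) (RatFunc Fq)) : Prop :=
  ∃ U : Matrix (Fin 3) (Fin 3) (Polynomial Fq), IsUnit U.det ∧
    (U.map (algebraMap (Polynomial Fq) (RatFunc Fq)))ᵀ * M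
      * (U.map (algebraMap (Polynomial Fq) (RatFunc Fq))) = M'


/-- The associated bilinear form on the lattice `A³`. -/
def BA (M : Matrix (Fin 3) (Fin 3) (RatFunc Fq)) (v w : Fin 3 → Polynomial Fq) : RatFunc Fq :=
  QA Fq M (v + w) - QA Fq M v - QA Fq M w

open Filter Topology

namespace Valued

variable {R Γ₀ : Type*} [Ring R] [LinearOrderedCommGroupWithZero Γ₀] [Valued R Γ₀]

instance : NonarchimedeanAddGroup R where
  is_nonarchimedean U hU := by
    obtain ⟨γ, hγ⟩ := (is_topological_valuation U).mp hU
    let V := v.restrict.ltAddSubgroup γ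
    exact ⟨⟨V, V.isOpen_of_mem_nhds ((is_topological_valuation _).mpr ⟨γ, subset_rfl⟩)⟩, hγ⟩

theorem tendsto_zero_of_le {ι : Type*} {l : Filter ι} {f g : ι → R} (hfg : ∀ i, v (f i) ≤ v (g i))
    (hg : Tendsto g l (𝓝 0)) : Tendsto f l (𝓝 0) := by
  rw [(hasBasis_nhds_zero R Γ₀).tendsto_right_iff] at hg ⊢
  intro γ _
  filter_upwards [hg γ trivial] with i hi
  simp only [Valuation.restrict_lt_iff_lt_embedding] at hi ⊢
  exact (hfg i).trans_lt hi

end Valued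

namespace Valuation

variable {K Γ₀ : Type*} [Field K] [LinearOrderedCommGroupWithZero Γ₀] (v : Valuation K Γ₀)
  {a b c x y : K}

theorem map_two_le_one : v (2 : K) ≤ 1 := by
  simpa [one_add_one_eq_two] using v.map_add (1 : K) 1

theorem map_two_mul_mul_mul_lt_max (hb : v b * v b < v a * v c) (hxy : x ≠ 0 ∨ y ≠ 0) :
    v (2 * b * x * y) < max (v (a * x * x)) (v (c * y * y)) := by
  have ha : v a ≠ 0 := left_ne_zero_of_mul (zero_le.trans_lt hb).ne'
  have hc : v c ≠ 0 := right_ne_zero_of_mul (zero_le.trans_lt hb).ne'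
  set N := max (v (a * x * x)) (v (c * y * y))
  have hN : 0 < N := by
    rcases hxy with hx | hy
    · exact lt_max_of_lt_left (zero_lt_iff.mpr (by simp [ha, hx]))
    · exact lt_max_of_lt_right (zero_lt_iff.mpr (by simp [hc, hy]))
  have hsq : v (b * x * y) * v (b * x * y) < N * N := by
    rcases eq_or_ne (v x * v y) 0 with hxy0 | hxy0
    · simpa [mul_assoc, hxy0] using mul_pos hN hN
    calc v (b * x * y) * v (b * x * y) = v b * v b * (v x * v y * (v x * v y)) := by
          simp only [map_mul, mul_comm, mul_left_comm]
      _ < v a * v c * (v x * v y * (v x * v y)) :=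
          mul_lt_mul_of_pos_right hb (zero_lt_iff.mpr (mul_ne_zero hxy0 hxy0))
      _ = v (a * x * x) * v (c * y * y) := by simp only [map_mul, mul_comm, mul_left_comm]
      _ ≤ N * N := mul_le_mul' (le_max_left _ _) (le_max_right _ _)
  rw [mul_assoc, mul_assoc, map_mul, ← mul_assoc]
  exact (mul_le_of_le_one_left' v.map_two_le_one).trans_lt (lt_of_mul_self_lt_mul_self₀ zero_le hsq)

theorem map_binary_le_max (hb : v b * v b < v a * v c) :
    v (a * x * x + 2 * b * x * y + c * y * y) ≤ max (v (a * x * x)) (v (c * y * y)) := by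
  by_cases hxy : x = 0 ∧ y = 0
  · simp [hxy.1, hxy.2]
  rw [add_right_comm]
  exact (v.map_add _ _).trans (max_le (v.map_add _ _)
    (v.map_two_mul_mul_mul_lt_max hb (not_and_or.mp hxy)).le)

/-- Completing the square, `a Q(x, y) = S² - (b² - ac) y²` with `S = ax + by`; a drop of
`v Q` below the maximum then makes `b² - ac` a square up to a factor `1 - ε` with `v ε < 1`. -/
theorem exists_discr_mul_self_eq (hb : v b * v b < v a * v c)
    (hlt : v (a * x * x + 2 * b * x * y + c * y * y) < max (v (a * x * x)) (v (c * y * y))) :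
    y ≠ 0 ∧ ∃ S ε : K, v ε < 1 ∧ (b * b - a * c) * (y * y) = S * S * (1 - ε) := by
  have ha : v a ≠ 0 := left_ne_zero_of_mul (zero_le.trans_lt hb).ne'
  have hxy : x ≠ 0 ∨ y ≠ 0 := by
    by_contra! h
    simp [h.1, h.2] at hlt
  have hcross := v.map_two_mul_mul_mul_lt_max hb hxy
  have hdiag : v (a * x * x) = v (c * y * y) := by
    by_contra hne
    have h13 : v (a * x * x + c * y * y) = max (v (a * x * x)) (v (c * y * y)) :=
      v.map_add_of_distinct_val hne
    rw [add_right_comm, v.map_add_eq_of_lt_left (h13 ▸ hcross), h13] at hlt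
    exact hlt.false
  rw [← hdiag, max_self] at hlt
  have hN : v (a * x * x) ≠ 0 := (zero_le.trans_lt hlt).ne'
  have hy : y ≠ 0 := by rintro rfl; simp [hdiag] at hN
  refine ⟨hy, ?_⟩
  have hby : v (b * y) < v (a * x) := by
    refine lt_of_mul_self_lt_mul_self₀ zero_le ?_
    calc v (b * y) * v (b * y) = v b * v b * (v y * v y) := by
          simp only [map_mul, mul_comm, mul_left_comm]
      _ < v a * v c * (v y * v y) :=
          mul_lt_mul_of_pos_right hb (zero_lt_iff.mpr (by simpa using hy))
      _ = v a * v (c * y * y) := by simp only [map_mul, mul_comm, mul_left_comm]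
      _ = v (a * x) * v (a * x) := by
          rw [← hdiag]; simp only [map_mul, mul_comm, mul_left_comm]
  have hS : v (a * x + b * y) * v (a * x + b * y) = v a * v (a * x * x) := by
    rw [v.map_add_eq_of_lt_left hby]; simp only [map_mul, mul_comm, mul_left_comm]
  have hS0 : a * x + b * y ≠ 0 := by
    intro h; rw [h, map_zero, zero_mul] at hS
    exact mul_ne_zero ha hN hS.symm
  refine ⟨a * x + b * y,
    a * (a * x * x + 2 * b * x * y + c * y * y) / ((a * x + b * y) * (a * x + b * y)), ?_, ?_⟩
  · rw [map_div₀, map_mul, map_mul, hS, div_lt_one₀ (zero_lt_iff.mpr (mul_ne_zero ha hN))]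
    exact mul_lt_mul_of_pos_left hlt (zero_lt_iff.mpr ha)
  · field_simp
    ring

theorem map_mul_lt_map_mul_mul_self {p : K} (hp : v p < v a) (hx : x ≠ 0) (hx1 : 1 ≤ v x) :
    v (p * x) < v (a * x * x) :=
  calc v (p * x) = v p * v x := map_mul v p x
    _ < v a * v x := mul_lt_mul_of_pos_right hp (zero_lt_iff.mpr ((v.ne_zero_iff).mpr hx))
    _ ≤ v a * v x * v x := le_mul_of_one_le_right' hx1
    _ = v (a * x * x) := by simp only [map_mul]

theorem map_two_mul_add_lt_max {p q : K} (hp : v p < v a) (hq : v q < v c)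
    (hx : x ≠ 0 → 1 ≤ v x) (hy : y ≠ 0 → 1 ≤ v y) (hxy : x ≠ 0 ∨ y ≠ 0) :
    v (2 * (p * x + q * y)) < max (v (a * x * x)) (v (c * y * y)) := by
  set N := max (v (a * x * x)) (v (c * y * y))
  have hN : 0 < N := by
    rcases hxy with hx0 | hy0
    · exact lt_max_of_lt_left (zero_le.trans_lt (v.map_mul_lt_map_mul_mul_self hp hx0 (hx hx0)))
    · exact lt_max_of_lt_right (zero_le.trans_lt (v.map_mul_lt_map_mul_mul_self hq hy0 (hy hy0)))
  have hterm {p a x : K} (hp : v p < v a) (hx : x ≠ 0 → 1 ≤ v x) (haN : v (a * x * x) ≤ N) :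
      v (p * x) < N := by
    rcases eq_or_ne x 0 with rfl | hx0
    · simpa using hN
    · exact (v.map_mul_lt_map_mul_mul_self hp hx0 (hx hx0)).trans_le haN
  calc v (2 * (p * x + q * y)) ≤ v (p * x + q * y) := by
        rw [map_mul]; exact mul_le_of_le_one_left' v.map_two_le_one
    _ ≤ max (v (p * x)) (v (q * y)) := v.map_add _ _
    _ < N := max_lt (hterm hp hx (le_max_left _ _)) (hterm hq hy (le_max_right _ _))

end Valuation

namespace Valued

variable {Γ₀ F : Type*} [LinearOrderedCommGroupWithZero Γ₀] [MulArchimedean Γ₀]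
  [Field F] [Valued F Γ₀] [CompleteSpace F]

/-- Square roots of principal units, as the limit of the iteration `z ↦ z + (1 - ε - z²) / 2`,
which contracts by the factor `v ε` near `1`. -/
theorem exists_mul_self_eq_one_sub (h2 : v (2 : F) = 1) {ε : F} (hε : v ε < 1) :
    ∃ z : F, z * z = 1 - ε := by
  let z : ℕ → F := fun n => Nat.rec 1 (fun _ z => z + (1 - ε - z * z) / 2) n
  let e : ℕ → F := fun n => 1 - ε - z n * z n
  have hz : ∀ n, z (n + 1) = z n + e n / 2 := fun n => rfl
  have h4 : v (4 : F) = 1 := by rw [show (4 : F) = 2 * 2 by norm_num, map_mul, h2, one_mul]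
  have h2ne : (2 : F) ≠ 0 := fun h => by simp [h] at h2
  have h4ne : (4 : F) ≠ 0 := fun h => by simp [h] at h4
  have he : ∀ n, e (n + 1) = e n * (1 - z n - e n / 4) := fun n => by
    simp only [e, hz]; field_simp; ring
  have hbound : ∀ n, v (z n - 1) ≤ v ε ∧ v (e n) ≤ v (ε ^ (n + 1)) := by
    intro n
    induction n with
    | zero => simp [z, e]
    | succ n ih =>
      have hen : v (e n) ≤ v ε :=
        ih.2.trans (by simpa [pow_succ] using mul_le_of_le_one_left' (pow_le_one' hε.le n))
      constructor
      · rw [hz, add_sub_right_comm]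
        refine (v.map_add _ _).trans (max_le ih.1 ?_)
        rwa [map_div₀, h2, div_one]
      · have hfac : v (1 - z n - e n / 4) ≤ v ε := by
          rw [show 1 - z n - e n / 4 = -(z n - 1) - e n / 4 by ring]
          refine (v.map_sub _ _).trans (max_le ?_ ?_)
          · exact (v.map_neg _).trans_le ih.1
          · rwa [map_div₀, h4, div_one]
        rw [he, map_mul, pow_succ, map_mul]
        exact mul_le_mul' ih.2 hfac
  have he0 : Tendsto e atTop (𝓝 0) :=
    tendsto_zero_of_le (fun n => (hbound n).2)
      ((tendsto_zero_pow_of_v_lt_one hε).comp (tendsto_add_atTop_nat 1))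
  have hcauchy : CauchySeq z :=
    NonarchimedeanAddGroup.cauchySeq_of_tendsto_sub_nhds_zero
      (by simpa only [hz, add_sub_cancel_left, zero_div] using he0.div_const 2)
  obtain ⟨L, hL⟩ := cauchySeq_tendsto_of_complete hcauchy
  refine ⟨L, ?_⟩
  have hlim := tendsto_nhds_unique (tendsto_const_nhds.sub (hL.mul hL)) he0
  linear_combination -hlim

theorem v_binary_eq_max (h2 : v (2 : F) = 1) {a b c : F} (hb : v b * v b < v a * v c)
    (haniso : ∀ X Y : F, a * X * X + 2 * b * X * Y + c * Y * Y = 0 → X = 0 ∧ Y = 0) (x y : F) :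
    v (a * x * x + 2 * b * x * y + c * y * y) = max (v (a * x * x)) (v (c * y * y)) := by
  refine (v.map_binary_le_max hb).antisymm (not_lt.mp fun hlt => ?_)
  obtain ⟨hy, S, ε, hε, hdisc⟩ := v.exists_discr_mul_self_eq hb hlt
  obtain ⟨z, hz⟩ := exists_mul_self_eq_one_sub h2 hε
  have : NeZero (2 : F) := ⟨fun h => by simp [h] at h2⟩
  have ha : a ≠ 0 := fun h => by simp [h] at hb
  obtain ⟨X, hX⟩ := exists_quadratic_eq_zero (b := 2 * b) (c := c) ha ⟨2 * (S * z / y), by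
    rw [discrim]; field_simp; linear_combination 4 * hdisc - 4 * S * S * hz⟩
  exact one_ne_zero (haniso X 1 (by linear_combination hX)).2

end Valued

theorem Matrix.IsSymm.dotProduct_mulVec_fin_three {R : Type*} [CommRing R]
    {M : Matrix (Fin 3) (Fin 3) R} (hM : M.IsSymm) (u : Fin 3 → R) :
    u ⬝ᵥ M *ᵥ u = M 0 0 * u 0 * u 0 + M 1 1 * u 1 * u 1 + M 2 2 * u 2 * u 2 +
      2 * M 0 1 * u 0 * u 1 + 2 * M 0 2 * u 0 * u 2 + 2 * M 1 2 * u 1 * u 2 := by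
  simp only [dotProduct, mulVec, Fin.sum_univ_three, ← hM.apply 0 1, ← hM.apply 0 2,
    ← hM.apply 1 2]
  ring

section GramMatrix

variable {k : Type} [Field k] {M : Matrix (Fin 3) (Fin 3) (RatFunc k)}

theorem QA_vecCons_zero (hM : M.IsSymm) (r s : k[X]) :
    QA k M ![r, s, 0] =
      M 0 0 * algebraMap k[X] (RatFunc k) r * algebraMap k[X] (RatFunc k) r +
        2 * M 0 1 * algebraMap k[X] (RatFunc k) r * algebraMap k[X] (RatFunc k) s +
          M 1 1 * algebraMap k[X] (RatFunc k) s * algebraMap k[X] (RatFunc k) s := by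
  rw [QA, Qval, hM.dotProduct_mulVec_fin_three]
  simp only [cons_val_zero, cons_val_one, cons_val, map_zero, mul_zero, add_zero]
  ring

theorem BA_vecCons_zero_e₃ (hM : M.IsSymm) (r s : k[X]) :
    BA k M ![r, s, 0] ![0, 0, 1] =
      2 * (M 0 2 * algebraMap k[X] (RatFunc k) r + M 1 2 * algebraMap k[X] (RatFunc k) s) := by
  simp only [BA, QA, Qval, hM.dotProduct_mulVec_fin_three, Pi.add_apply, cons_val_zero,
    cons_val_one, cons_val, add_zero, zero_add, map_one, mul_one, map_zero, mul_zero]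
  ring

end GramMatrix

section RatFunc

variable {k : Type} [Field k] [DecidableEq (RatFunc k)]

instance : CompleteSpace (RatFunc.CompletionAtInfty k) :=
  @UniformSpace.Completion.completeSpace (RatFunc k) (RatFunc.inftyValued k).toUniformSpace

theorem v_toInfty (x : RatFunc k) :
    Valued.v (toInfty k x) = RatFunc.inftyValuation k x := by
  rw [RatFunc.valuedCompletionAtInfty.def, RatFunc.inftyValuation_apply, ← RatFunc.inftyValued.def]
  exact @Valued.extensionValuation_apply_coe _ _ _ _ (RatFunc.inftyValued k) x

theorem degK_lt_degK_iff {x y : RatFunc k} :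
    degK k x < degK k y ↔ RatFunc.inftyValuation k x < RatFunc.inftyValuation k y := by
  simp only [degK, RatFunc.inftyValuation_apply, RatFunc.inftyValuationDef]
  by_cases hx : x = 0 <;> by_cases hy : y = 0 <;> simp [hx, hy]

theorem degK_le_degK_iff {x y : RatFunc k} :
    degK k x ≤ degK k y ↔ RatFunc.inftyValuation k x ≤ RatFunc.inftyValuation k y := by
  rw [← not_lt, ← not_lt, degK_lt_degK_iff]

theorem one_le_inftyValuation_algebraMap {t : k[X]} (ht : t ≠ 0) :
    1 ≤ RatFunc.inftyValuation k (algebraMap k[X] (RatFunc k) t) := by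
  rw [RatFunc.inftyValuation_apply, RatFunc.inftyValuation.polynomial k ht, ← WithZero.exp_zero,
    WithZero.exp_le_exp]
  exact Int.natCast_nonneg _

theorem inftyValuation_two (h2 : (2 : k) ≠ 0) : RatFunc.inftyValuation k 2 = 1 := by
  rw [← map_ofNat RatFunc.C 2]
  exact RatFunc.inftyValuation.C k h2

theorem inftyValuation_binary_eq_max (h2 : (2 : k) ≠ 0) {a b c : RatFunc k}
    (hb : RatFunc.inftyValuation k b * RatFunc.inftyValuation k b <
      RatFunc.inftyValuation k a * RatFunc.inftyValuation k c)
    (haniso : ∀ X Y : RatFunc.CompletionAtInfty k,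
      toInfty k a * X * X + 2 * toInfty k b * X * Y + toInfty k c * Y * Y = 0 → X = 0 ∧ Y = 0)
    (x y : RatFunc k) :
    RatFunc.inftyValuation k (a * x * x + 2 * b * x * y + c * y * y) =
      max (RatFunc.inftyValuation k (a * x * x)) (RatFunc.inftyValuation k (c * y * y)) := by
  have h2' : Valued.v (2 : RatFunc.CompletionAtInfty k) = 1 := by
    rw [← map_ofNat (toInfty k) 2, v_toInfty, inftyValuation_two h2]
  have := Valued.v_binary_eq_max h2' (by simpa only [v_toInfty] using hb) haniso
    (toInfty k x) (toInfty k y)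
  simpa only [← map_ofNat (toInfty k) 2, ← map_mul, ← map_add, v_toInfty] using this

theorem IsDefinite.binary_anisotropic {M : Matrix (Fin 3) (Fin 3) (RatFunc k)}
    (hdef : IsDefinite k M) (hM : M.IsSymm) (X Y : RatFunc.CompletionAtInfty k)
    (h : toInfty k (M 0 0) * X * X + 2 * toInfty k (M 0 1) * X * Y +
      toInfty k (M 1 1) * Y * Y = 0) :
    X = 0 ∧ Y = 0 := by
  have h0 := hdef ![X, Y, 0] (by
    rw [(hM.map _).dotProduct_mulVec_fin_three]
    simp only [map_apply, cons_val_zero, cons_val_one, cons_val, mul_zero, add_zero]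
    linear_combination h)
  exact ⟨congr_fun h0 0, congr_fun h0 1⟩

end RatFunc

/-- For `w` in the sublattice `A v₁ + A v₂` of a reduced definite ternary lattice,
`deg B(w, v₃) < deg Q(w)`. -/
theorem stmt_5 (hodd : Odd (Fintype.card Fq))
    (M : Matrix (Fin 3) (Fin 3) (RatFunc Fq))
    (hdef : IsDefinite Fq M) (hred : IsReducedGram Fq M)
    (r s : Polynomial Fq) (hw : ![r, s, 0] ≠ (0 : Fin 3 → Polynomial Fq)) :
    degK Fq (BA Fq M ![r, s, 0] ![0, 0, 1]) < degK Fq (QA Fq M ![r, s, 0]) := by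
  obtain ⟨hM, hdiag, hoff⟩ := hred
  have h2 : (2 : Fq) ≠ 0 := Ring.two_ne_zero fun h =>
    Nat.not_even_iff_odd.mpr hodd (Nat.even_iff.mpr (FiniteField.even_card_of_char_two h))
  have hrs : r ≠ 0 ∨ s ≠ 0 := by
    contrapose! hw
    simp [hw.1, hw.2]
  have hba := degK_lt_degK_iff.mp (hoff 0 1 (by decide))
  have hac := degK_le_degK_iff.mp (hdiag 0 1 (by decide))
  rw [BA_vecCons_zero_e₃ hM, QA_vecCons_zero hM, degK_lt_degK_iff,
    inftyValuation_binary_eq_max h2 (mul_lt_mul'' hba (hba.trans_le hac) zero_le zero_le)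
      (hdef.binary_anisotropic hM)]
  exact (RatFunc.inftyValuation Fq).map_two_mul_add_lt_max
    (degK_lt_degK_iff.mp (hoff 0 2 (by decide))) (degK_lt_degK_iff.mp (hoff 1 2 (by decide)))
    (fun hx => one_le_inftyValuation_algebraMap fun hr => hx (by simp [hr]))
    (fun hy => one_le_inftyValuation_algebraMap fun hs => hy (by simp [hs]))
    (hrs.imp RatFunc.algebraMap_ne_zero RatFunc.algebraMap_ne_zero)

end
end
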